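/- Let Z be the B₃ configuration with representatives P₁=(1,0,0), P₂=(0,1,0), P₃=(0,0,1), P₄=(1,1,0), P₅=(1,−1,0), P₆=(1,0,1), P₇=(1,0,−1), P₈=(0,1,1), P₉=(0,1,−1), and for (a,b,c) ∈ ℂ³ let f_{(a,b,c)}(x,y,z) = 3a(b²−c²)·x²yz + 3b(c²−a²)·xy²z + 3c(a²−b²)·xyz² + a³·yz(y²−z²) − b³·xz(x²−z²) + c³·xy(x²−y²). Then the unexpected quartic at a general point is unique up to scalar: there exists a nonzero polynomial h ∈ ℂ[a,b,c] such that for all (a,b,c) with h(a,b,c) ≠ 0, every homogeneous polynomial F of degree 4 in ℂ[x,y,z] that vanishes at all nine points of Z and whose partial derivatives of order ≤ 2 all vanish at (a,b,c) is a scalar multiple of f_{(a,b,c)}. (This gives the 1:1 correspondence between unexpected curves admitted by Z and second osculating spaces of the B₃ surface.) -/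

import Mathlib

/-!
A quartic vanishing at the nine points of `Z` lies in the six-dimensional space spanned by
`x³y - xy³`, `x³z - xz³`, `y³z - yz³`, `x²yz`, `xy²z`, `xyz²`: the coordinate points kill the
pure fourth powers, and each pair `(1, ±1, 0)`, ... kills one `x²y²`-type coefficient and makes
the two remaining coefficients on that coordinate line opposite. On this space, vanishing of the
Hessian at `(a, b, c)` is a linear system in the six coefficients; eliminating the three mixed
coefficients leaves two equations in the other three whose minors carry the factor
`a b² c² (b² + c² - 3a²)`, so for `abc (b² + c² - 3a²) ≠ 0` the solutions form the line spanned by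
`f_{(a,b,c)}`.
-/

open MvPolynomial

/-- The nine points of the B₃ configuration in ℂ³. -/
noncomputable def B3points : Fin 9 → (Fin 3 → ℂ) :=
  ![![1, 0, 0], ![0, 1, 0], ![0, 0, 1],
    ![1, 1, 0], ![1, -1, 0], ![1, 0, 1],
    ![1, 0, -1], ![0, 1, 1], ![0, 1, -1]]

/-- The unexpected quartic of the B₃ configuration associated to (a,b,c). -/
noncomputable def unexpQuartic (a b c : ℂ) : MvPolynomial (Fin 3) ℂ :=
  C (3 * a * (b ^ 2 - c ^ 2)) * (X 0 ^ 2 * X 1 * X 2)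
  + C (3 * b * (c ^ 2 - a ^ 2)) * (X 0 * X 1 ^ 2 * X 2)
  + C (3 * c * (a ^ 2 - b ^ 2)) * (X 0 * X 1 * X 2 ^ 2)
  + C (a ^ 3) * (X 1 * X 2 * (X 1 ^ 2 - X 2 ^ 2))
  - C (b ^ 3) * (X 0 * X 2 * (X 0 ^ 2 - X 2 ^ 2))
  + C (c ^ 3) * (X 0 * X 1 * (X 0 ^ 2 - X 1 ^ 2))

/-- A polynomial has a point of multiplicity at least 3 at p if it and all its
partial derivatives of order ≤ 2 vanish at p. -/
def HasTriplePointAt (F : MvPolynomial (Fin 3) ℂ) (p : Fin 3 → ℂ) : Prop :=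
  eval p F = 0 ∧ (∀ i : Fin 3, eval p (pderiv i F) = 0) ∧
    ∀ i j : Fin 3, eval p (pderiv i (pderiv j F)) = 0

section
variable {R : Type*} [CommRing R]

@[simp]
lemma pderiv_ofNat {σ : Type*} (i : σ) (n : ℕ) [n.AtLeastTwo] :
    pderiv i (ofNat(n) : MvPolynomial σ R) = 0 := by
  rw [← map_ofNat C n]
  exact pderiv_C

noncomputable def expXYZ (i j k : ℕ) : Fin 3 →₀ ℕ :=
  Finsupp.single 0 i + Finsupp.single 1 j + Finsupp.single 2 k

lemma eq_expXYZ (d : Fin 3 →₀ ℕ) : d = expXYZ (d 0) (d 1) (d 2) := by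
  ext x
  fin_cases x <;> simp [expXYZ]

lemma expXYZ_inj {i j k i' j' k' : ℕ} :
    expXYZ i j k = expXYZ i' j' k' ↔ i = i' ∧ j = j' ∧ k = k' := by
  refine ⟨fun h => ⟨?_, ?_, ?_⟩, by rintro ⟨rfl, rfl, rfl⟩; rfl⟩
  · simpa [expXYZ] using DFunLike.congr_fun h 0
  · simpa [expXYZ] using DFunLike.congr_fun h 1
  · simpa [expXYZ] using DFunLike.congr_fun h 2

lemma degree_expXYZ (i j k : ℕ) : (expXYZ i j k).degree = i + j + k := by
  simp [expXYZ, map_add]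

lemma coeff_C_mul_X_pow_mul_X_pow_mul_X_pow (a : R) (i j k : ℕ) (d : Fin 3 →₀ ℕ) :
    coeff d (C a * (X 0 ^ i * X 1 ^ j * X 2 ^ k)) = if expXYZ i j k = d then a else 0 := by
  simp only [X_pow_eq_monomial, monomial_mul, C_mul_monomial, coeff_monomial, expXYZ, mul_one]
  rfl

noncomputable abbrev coeffXYZ (i j k : ℕ) (F : MvPolynomial (Fin 3) R) : R :=
  coeff (expXYZ i j k) F

lemma MvPolynomial.IsHomogeneous.eq_sum_coeffXYZ {F : MvPolynomial (Fin 3) R}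
    (hF : F.IsHomogeneous 4) :
    F = C (coeffXYZ 4 0 0 F) * (X 0 ^ 4 * X 1 ^ 0 * X 2 ^ 0)
      + C (coeffXYZ 0 4 0 F) * (X 0 ^ 0 * X 1 ^ 4 * X 2 ^ 0)
      + C (coeffXYZ 0 0 4 F) * (X 0 ^ 0 * X 1 ^ 0 * X 2 ^ 4)
      + C (coeffXYZ 3 1 0 F) * (X 0 ^ 3 * X 1 ^ 1 * X 2 ^ 0)
      + C (coeffXYZ 1 3 0 F) * (X 0 ^ 1 * X 1 ^ 3 * X 2 ^ 0)
      + C (coeffXYZ 2 2 0 F) * (X 0 ^ 2 * X 1 ^ 2 * X 2 ^ 0)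
      + C (coeffXYZ 3 0 1 F) * (X 0 ^ 3 * X 1 ^ 0 * X 2 ^ 1)
      + C (coeffXYZ 1 0 3 F) * (X 0 ^ 1 * X 1 ^ 0 * X 2 ^ 3)
      + C (coeffXYZ 2 0 2 F) * (X 0 ^ 2 * X 1 ^ 0 * X 2 ^ 2)
      + C (coeffXYZ 0 3 1 F) * (X 0 ^ 0 * X 1 ^ 3 * X 2 ^ 1)
      + C (coeffXYZ 0 1 3 F) * (X 0 ^ 0 * X 1 ^ 1 * X 2 ^ 3)
      + C (coeffXYZ 0 2 2 F) * (X 0 ^ 0 * X 1 ^ 2 * X 2 ^ 2)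
      + C (coeffXYZ 2 1 1 F) * (X 0 ^ 2 * X 1 ^ 1 * X 2 ^ 1)
      + C (coeffXYZ 1 2 1 F) * (X 0 ^ 1 * X 1 ^ 2 * X 2 ^ 1)
      + C (coeffXYZ 1 1 2 F) * (X 0 ^ 1 * X 1 ^ 1 * X 2 ^ 2) := by
  ext d
  obtain ⟨i, j, k, rfl⟩ : ∃ i j k, d = expXYZ i j k := ⟨_, _, _, eq_expXYZ d⟩
  simp only [coeff_add, coeff_C_mul_X_pow_mul_X_pow_mul_X_pow, expXYZ_inj, coeffXYZ]
  by_cases h4 : i + j + k = 4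
  · obtain rfl : k = 4 - i - j := by omega
    have hi : i ≤ 4 := by omega
    have hj : j ≤ 4 - i := by omega
    interval_cases i <;> interval_cases j <;> simp
  · have hne : ∀ {i' j' k' : ℕ}, i' + j' + k' = 4 → (i' = i ∧ j' = j ∧ k' = k ↔ False) := by
      intro i' j' k' h'
      simp only [iff_false]
      omega
    rw [hF.coeff_eq_zero (by rwa [degree_expXYZ])]
    simp [hne]

noncomputable def b3Quartic (p q r s t u : R) : MvPolynomial (Fin 3) R :=
  C p * (X 0 ^ 3 * X 1 - X 0 * X 1 ^ 3) + C q * (X 0 ^ 3 * X 2 - X 0 * X 2 ^ 3)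
    + C r * (X 1 ^ 3 * X 2 - X 1 * X 2 ^ 3)
    + C s * (X 0 ^ 2 * X 1 * X 2) + C t * (X 0 * X 1 ^ 2 * X 2) + C u * (X 0 * X 1 * X 2 ^ 2)

lemma b3Quartic_hessian_equations {p q r s t u a b c : R}
    (h : ∀ i j : Fin 3, eval ![a, b, c] (pderiv i (pderiv j (b3Quartic p q r s t u))) = 0) :
    6 * a * b * p + 6 * a * c * q + 2 * b * c * s = 0 ∧
    -6 * a * b * p + 6 * b * c * r + 2 * a * c * t = 0 ∧
    -6 * a * c * q - 6 * b * c * r + 2 * a * b * u = 0 ∧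
    3 * (a ^ 2 - b ^ 2) * p + 2 * a * c * s + 2 * b * c * t + c ^ 2 * u = 0 ∧
    3 * (a ^ 2 - c ^ 2) * q + 2 * a * b * s + b ^ 2 * t + 2 * b * c * u = 0 ∧
    3 * (b ^ 2 - c ^ 2) * r + a ^ 2 * s + 2 * a * b * t + 2 * a * c * u = 0 := by
  have hxx := h 0 0
  have hyy := h 1 1
  have hzz := h 2 2
  have hxy := h 0 1
  have hxz := h 0 2
  have hyz := h 1 2
  simp only [b3Quartic, map_add, map_sub, map_mul, map_pow, Derivation.leibniz,
    Derivation.leibniz_pow, pderiv_X, pderiv_C, pderiv_ofNat, Pi.single_apply, Fin.isValue,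
    Fin.reduceEq, if_true, if_false, smul_eq_mul, nsmul_eq_mul, Nat.cast_ofNat, Nat.reduceSub,
    Nat.cast_one, map_zero, map_one, pderiv_one, eval_C, eval_X, eval_ofNat, Matrix.cons_val,
    Matrix.cons_val_zero, Matrix.cons_val_one] at hxx hyy hzz hxy hxz hyz
  refine ⟨?_, ?_, ?_, ?_, ?_, ?_⟩
  · linear_combination hxx
  · linear_combination hyy
  · linear_combination hzz
  · linear_combination hxy
  · linear_combination hxz
  · linear_combination hyz

end

lemma exists_eq_b3Quartic {F : MvPolynomial (Fin 3) ℂ} (hF : F.IsHomogeneous 4)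
    (hZ : ∀ i, eval (B3points i) F = 0) : ∃ p q r s t u : ℂ, F = b3Quartic p q r s t u := by
  rw [hF.eq_sum_coeffXYZ] at hZ ⊢
  obtain ⟨e1, e2, e3, e4, e5, e6, e7, e8, e9⟩ :=
    (⟨hZ 0, hZ 1, hZ 2, hZ 3, hZ 4, hZ 5, hZ 6, hZ 7, hZ 8⟩ : _ ∧ _ ∧ _ ∧ _ ∧ _ ∧ _ ∧ _ ∧ _ ∧ _)
  simp only [B3points, map_add, map_mul, map_pow, eval_C, eval_X, Matrix.cons_val, Fin.isValue,
    Matrix.cons_val_zero, Matrix.cons_val_one] at e1 e2 e3 e4 e5 e6 e7 e8 e9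
  have h400 : coeffXYZ 4 0 0 F = 0 := by linear_combination e1
  have h040 : coeffXYZ 0 4 0 F = 0 := by linear_combination e2
  have h004 : coeffXYZ 0 0 4 F = 0 := by linear_combination e3
  have h220 : coeffXYZ 2 2 0 F = 0 := by linear_combination (e4 + e5) / 2 - e1 - e2
  have h202 : coeffXYZ 2 0 2 F = 0 := by linear_combination (e6 + e7) / 2 - e1 - e3
  have h022 : coeffXYZ 0 2 2 F = 0 := by linear_combination (e8 + e9) / 2 - e2 - e3
  have h130 : coeffXYZ 1 3 0 F = -coeffXYZ 3 1 0 F := by linear_combination (e4 - e5) / 2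
  have h103 : coeffXYZ 1 0 3 F = -coeffXYZ 3 0 1 F := by linear_combination (e6 - e7) / 2
  have h013 : coeffXYZ 0 1 3 F = -coeffXYZ 0 3 1 F := by linear_combination (e8 - e9) / 2
  refine ⟨coeffXYZ 3 1 0 F, coeffXYZ 3 0 1 F, coeffXYZ 0 3 1 F, coeffXYZ 2 1 1 F,
    coeffXYZ 1 2 1 F, coeffXYZ 1 1 2 F, ?_⟩
  rw [h400, h040, h004, h220, h202, h022, h130, h103, h013, b3Quartic]
  simp only [map_zero, map_neg]
  ring

lemma exists_eq_mul_of_b3_hessian_equations {K : Type*} [Field K] [CharZero K]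
    {a b c p q r s t u : K}
    (hgen : a * b * c * (b ^ 2 + c ^ 2 - 3 * a ^ 2) ≠ 0)
    (hxx : 6 * a * b * p + 6 * a * c * q + 2 * b * c * s = 0)
    (hyy : -6 * a * b * p + 6 * b * c * r + 2 * a * c * t = 0)
    (hzz : -6 * a * c * q - 6 * b * c * r + 2 * a * b * u = 0)
    (hxy : 3 * (a ^ 2 - b ^ 2) * p + 2 * a * c * s + 2 * b * c * t + c ^ 2 * u = 0)
    (hxz : 3 * (a ^ 2 - c ^ 2) * q + 2 * a * b * s + b ^ 2 * t + 2 * b * c * u = 0) :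
    ∃ k : K, p = k * c ^ 3 ∧ q = k * -b ^ 3 ∧ r = k * a ^ 3 ∧ s = k * (3 * a * (b ^ 2 - c ^ 2)) ∧
      t = k * (3 * b * (c ^ 2 - a ^ 2)) ∧ u = k * (3 * c * (a ^ 2 - b ^ 2)) := by
  obtain ⟨⟨⟨ha, hb⟩, hc⟩, -⟩ : ((a ≠ 0 ∧ b ≠ 0) ∧ c ≠ 0) ∧ _ := by
    simpa only [ne_eq, mul_eq_zero, not_or] using hgen
  have hpqr₁ : a * b * c * (b ^ 2 - a ^ 2) * p + a * c ^ 2 * (c ^ 2 - 2 * a ^ 2) * q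
      + b * c ^ 2 * (c ^ 2 - 2 * b ^ 2) * r = 0 := by
    linear_combination (a * b * c / 3) * hxy - (a ^ 2 * c / 3) * hxx - (b ^ 2 * c / 3) * hyy
      - (c ^ 3 / 6) * hzz
  have hpqr₂ : a * b ^ 2 * (b ^ 2 - 2 * a ^ 2) * p + a * b * c * (c ^ 2 - a ^ 2) * q
      + b ^ 2 * c * (2 * c ^ 2 - b ^ 2) * r = 0 := by
    linear_combination (a * b * c / 3) * hxz - (a ^ 2 * b / 3) * hxx - (b ^ 3 / 6) * hyy
      - (b * c ^ 2 / 3) * hzz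
  have hdet : b * c * (a * b * c * (b ^ 2 + c ^ 2 - 3 * a ^ 2)) ≠ 0 :=
    mul_ne_zero (mul_ne_zero hb hc) hgen
  have hq : c ^ 3 * q = -b ^ 3 * p := mul_left_cancel₀ hdet <| by
    linear_combination (b ^ 2 * c * (2 * c ^ 2 - b ^ 2)) * hpqr₁
      - (b * c ^ 2 * (c ^ 2 - 2 * b ^ 2)) * hpqr₂
  have hr : c ^ 3 * r = a ^ 3 * p := mul_left_cancel₀ hdet <| by
    linear_combination (a * c ^ 2 * (c ^ 2 - 2 * a ^ 2)) * hpqr₂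
      - (a * b * c * (c ^ 2 - a ^ 2)) * hpqr₁
  have hs : c ^ 3 * s = 3 * a * (b ^ 2 - c ^ 2) * p := mul_left_cancel₀ (mul_ne_zero hb hc) <| by
    linear_combination (c ^ 3 / 2) * hxx - (3 * a * c) * hq
  have ht : c ^ 3 * t = 3 * b * (c ^ 2 - a ^ 2) * p := mul_left_cancel₀ ha <| by
    linear_combination (c ^ 2 / 2) * hyy - (3 * b) * hr
  have hu : c ^ 2 * u = 3 * (a ^ 2 - b ^ 2) * p := mul_left_cancel₀ (mul_ne_zero ha hb) <| by
    linear_combination (c ^ 2 / 2) * hzz + (3 * a) * hq + (3 * b) * hr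
  have hc3 : c ^ 3 ≠ 0 := pow_ne_zero 3 hc
  refine ⟨p / c ^ 3, ?_, ?_, ?_, ?_, ?_, ?_⟩ <;> field_simp
  · linear_combination hq
  · linear_combination hr
  · linear_combination hs
  · linear_combination ht
  · linear_combination hu

lemma smul_unexpQuartic (k a b c : ℂ) :
    k • unexpQuartic a b c = b3Quartic (k * c ^ 3) (k * -b ^ 3) (k * a ^ 3)
      (k * (3 * a * (b ^ 2 - c ^ 2))) (k * (3 * b * (c ^ 2 - a ^ 2)))
      (k * (3 * c * (a ^ 2 - b ^ 2))) := by
  simp only [unexpQuartic, b3Quartic, smul_eq_C_mul, C_mul, C_neg]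
  ring

/-- The unexpected quartic at a general point is unique up to scalar: there is a
nonzero polynomial h in a, b, c such that whenever h(a,b,c) ≠ 0, every quartic
through the nine B₃ points with a triple point at (a,b,c) is a scalar multiple
of f_{(a,b,c)}.  This gives the 1:1 correspondence between unexpected curves
admitted by Z and second osculating spaces of the B₃ surface. -/
theorem unexpected_quartic_unique :
    ∃ h : MvPolynomial (Fin 3) ℂ, h ≠ 0 ∧
      ∀ a b c : ℂ, eval ![a, b, c] h ≠ 0 →
        ∀ F : MvPolynomial (Fin 3) ℂ, F.IsHomogeneous 4 →
          (∀ i : Fin 9, eval (B3points i) F = 0) →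
          HasTriplePointAt F ![a, b, c] →
          ∃ t : ℂ, F = t • unexpQuartic a b c := by
  refine ⟨X 0 * X 1 * X 2 * (X 1 ^ 2 + X 2 ^ 2 - 3 * X 0 ^ 2), ?_, ?_⟩
  · intro h0
    have h1 := congrArg (eval fun _ => (1 : ℂ)) h0
    norm_num at h1
  intro a b c hgen F hF hZ htp
  obtain ⟨p, q, r, s, t, u, rfl⟩ := exists_eq_b3Quartic hF hZ
  obtain ⟨hxx, hyy, hzz, hxy, hxz, -⟩ := b3Quartic_hessian_equations htp.2.2
  obtain ⟨k, rfl, rfl, rfl, rfl, rfl, rfl⟩ :=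
    exists_eq_mul_of_b3_hessian_equations (by simpa using hgen) hxx hyy hzz hxy hxz
  exact ⟨k, (smul_unexpQuartic k a b c).symm⟩
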